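/- Let d ≥ 1, let φ : EuclideanSpace ℝ (Fin d) → ℝ be twice continuously differentiable with compact support, and let v : EuclideanSpace ℝ (Fin d) → EuclideanSpace ℝ (Fin d) be continuously differentiable and divergence-free (∑_j ∂_j v_j = 0 pointwise). Then ∫ Δφ(x) · ( v(x) · ∇φ(x) ) dx = −∑_{i,j} ∫ ∂_i φ(x) ∂_j φ(x) ∂_i v_j(x) dx, where Δφ = ∑_i ∂_i ∂_i φ and v·∇φ = ∑_j v_j ∂_j φ. -/

import Mathlib

open MeasureTheory

/-!
Integrate by parts in `xᵢ`: `∫ ∂ᵢ∂ᵢφ · vⱼ∂ⱼφ = -∫ ∂ᵢφ ∂ⱼφ ∂ᵢvⱼ - ∫ vⱼ ∂ᵢφ ∂ⱼ∂ᵢφ`, using the symmetry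
of second derivatives. The last term is `½ ∫ vⱼ ∂ⱼ((∂ᵢφ)²)`, and summed over `j` it equals
`-½ ∫ (div v) (∂ᵢφ)² = 0`. Compact support of `φ` makes every integrand continuous with compact
support, so all integrals exist and integration by parts has no boundary terms.
-/

/-- The partial derivative of `f` in the `j`-th coordinate direction. -/
noncomputable def pd {d : ℕ} (j : Fin d) (f : EuclideanSpace ℝ (Fin d) → ℝ)
    (x : EuclideanSpace ℝ (Fin d)) : ℝ :=
  fderiv ℝ f x (EuclideanSpace.single j 1)

theorem integral_sum_mul_sum {α ι κ : Type*} [MeasurableSpace α] {μ : Measure α}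
    (s : Finset ι) (t : Finset κ) {f : ι → α → ℝ} {g : κ → α → ℝ}
    (h : ∀ i ∈ s, ∀ j ∈ t, Integrable (fun x => f i x * g j x) μ) :
    ∫ x, (∑ i ∈ s, f i x) * (∑ j ∈ t, g j x) ∂μ = ∑ i ∈ s, ∑ j ∈ t, ∫ x, f i x * g j x ∂μ := by
  simp_rw [Finset.sum_mul_sum]
  rw [integral_finsetSum s fun i hi => integrable_finsetSum t (h i hi)]
  exact Finset.sum_congr rfl fun i hi => integral_finsetSum t (h i hi)

section PartialDerivative

variable {d : ℕ} {f g : EuclideanSpace ℝ (Fin d) → ℝ}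

theorem contDiff_pd {m n : WithTop ℕ∞} (j : Fin d) (hf : ContDiff ℝ n f) (hmn : m + 1 ≤ n) :
    ContDiff ℝ m (pd j f) :=
  (hf.fderiv_right hmn).clm_apply contDiff_const

theorem continuous_pd (j : Fin d) (hf : ContDiff ℝ 1 f) : Continuous (pd j f) :=
  (contDiff_pd (m := 0) j hf le_rfl).continuous

theorem HasCompactSupport.pd (j : Fin d) (hf : HasCompactSupport f) :
    HasCompactSupport (pd j f) :=
  hf.fderiv_apply ℝ _

theorem pd_mul (i : Fin d) {x : EuclideanSpace ℝ (Fin d)} (hf : DifferentiableAt ℝ f x)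
    (hg : DifferentiableAt ℝ g x) :
    pd i (fun y => f y * g y) x = pd i f x * g x + f x * pd i g x := by
  simp only [pd, fderiv_fun_mul hf hg, add_apply, smul_apply, smul_eq_mul]
  ring

theorem pd_pd_eq_fderiv_fderiv (i j : Fin d) {x : EuclideanSpace ℝ (Fin d)}
    (hf : DifferentiableAt ℝ (fderiv ℝ f) x) :
    pd i (pd j f) x =
      fderiv ℝ (fderiv ℝ f) x (EuclideanSpace.single i 1) (EuclideanSpace.single j 1) := by
  change fderiv ℝ (fun y => fderiv ℝ f y (EuclideanSpace.single j 1)) x _ = _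
  simp [fderiv_clm_apply hf (differentiableAt_const _)]

theorem pd_comm (hf : ContDiff ℝ 2 f) (i j : Fin d) (x : EuclideanSpace ℝ (Fin d)) :
    pd i (pd j f) x = pd j (pd i f) x := by
  have hf' : Differentiable ℝ (fderiv ℝ f) :=
    (hf.fderiv_right (m := 1) (by norm_num)).differentiable one_ne_zero
  rw [pd_pd_eq_fderiv_fderiv i j (hf' x), pd_pd_eq_fderiv_fderiv j i (hf' x)]
  exact (hf.contDiffAt.isSymmSndFDerivAt minSmoothness_of_isRCLikeNormedField.le).eq _ _

theorem integral_mul_pd_eq_neg_integral_pd_mul (i : Fin d) (hf : ContDiff ℝ 1 f)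
    (hg : ContDiff ℝ 1 g) (hgc : HasCompactSupport g) :
    ∫ x, f x * pd i g x = -∫ x, pd i f x * g x :=
  integral_mul_fderiv_eq_neg_fderiv_mul_of_integrable
    (((continuous_pd i hf).mul hg.continuous).integrable_of_hasCompactSupport hgc.mul_left)
    ((hf.continuous.mul (continuous_pd i hg)).integrable_of_hasCompactSupport
      (hgc.pd i).mul_left)
    ((hf.continuous.mul hg.continuous).integrable_of_hasCompactSupport hgc.mul_left)
    (fun _ _ => (hf.differentiable one_ne_zero).differentiableAt)
    (fun _ _ => (hg.differentiable one_ne_zero).differentiableAt)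

theorem sum_integral_mul_pd_eq_zero_of_div_eq_zero
    {v : EuclideanSpace ℝ (Fin d) → EuclideanSpace ℝ (Fin d)} (hv : ContDiff ℝ 1 v)
    (hdiv : ∀ x, ∑ j, pd j (fun y => v y j) x = 0) (hg : ContDiff ℝ 1 g)
    (hgc : HasCompactSupport g) :
    ∑ j, ∫ x, v x j * pd j g x = 0 := by
  have hvj (j : Fin d) : ContDiff ℝ 1 (fun y => v y j) := (contDiff_piLp 2).1 hv j
  calc ∑ j, ∫ x, v x j * pd j g x
      = -∑ j, ∫ x, pd j (fun y => v y j) x * g x := by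
        simp only [integral_mul_pd_eq_neg_integral_pd_mul _ (hvj _) hg hgc, Finset.sum_neg_distrib]
    _ = -∫ x, (∑ j, pd j (fun y => v y j) x) * g x := by
        simp_rw [Finset.sum_mul]
        rw [integral_finsetSum _ (f := fun j x => pd j (fun y => v y j) x * g x) fun j _ =>
          ((continuous_pd j (hvj j)).mul hg.continuous).integrable_of_hasCompactSupport
            hgc.mul_left]
    _ = 0 := by simp [hdiv]

theorem sum_integral_mul_mul_pd_self_eq_zero
    {v : EuclideanSpace ℝ (Fin d) → EuclideanSpace ℝ (Fin d)} (hv : ContDiff ℝ 1 v)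
    (hdiv : ∀ x, ∑ j, pd j (fun y => v y j) x = 0) (hf : ContDiff ℝ 1 f)
    (hfc : HasCompactSupport f) :
    ∑ j, ∫ x, v x j * (f x * pd j f x) = 0 := by
  have hsq (j : Fin d) (x) :
      v x j * pd j (fun y => f y * f y) x = 2 * (v x j * (f x * pd j f x)) := by
    rw [pd_mul j ((hf.differentiable one_ne_zero) x) ((hf.differentiable one_ne_zero) x)]
    ring
  have := sum_integral_mul_pd_eq_zero_of_div_eq_zero hv hdiv (hf.mul hf) hfc.mul_left
  simp_rw [hsq, integral_const_mul, ← Finset.mul_sum] at this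
  simpa using this

theorem integral_pd_pd_mul_mul_pd_eq {φ u : EuclideanSpace ℝ (Fin d) → ℝ} (hφ : ContDiff ℝ 2 φ)
    (hφc : HasCompactSupport φ) (hu : ContDiff ℝ 1 u) (i j : Fin d) :
    ∫ x, pd i (pd i φ) x * (u x * pd j φ x) =
      -(∫ x, pd i φ x * pd j φ x * pd i u x) - ∫ x, u x * (pd i φ x * pd j (pd i φ) x) := by
  have hψ (k : Fin d) : ContDiff ℝ 1 (pd k φ) := contDiff_pd k hφ (by norm_num)
  have hdiff {h : EuclideanSpace ℝ (Fin d) → ℝ} (hh : ContDiff ℝ 1 h) (x) :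
      DifferentiableAt ℝ h x := hh.differentiable one_ne_zero x
  calc ∫ x, pd i (pd i φ) x * (u x * pd j φ x)
      = ∫ x, u x * pd j φ x * pd i (pd i φ) x := by simp_rw [mul_comm (pd i (pd i φ) _)]
    _ = -∫ x, pd i (fun y => u y * pd j φ y) x * pd i φ x :=
        integral_mul_pd_eq_neg_integral_pd_mul i (hu.mul (hψ j)) (hψ i) (hφc.pd i)
    _ = -∫ x, (pd i φ x * pd j φ x * pd i u x + u x * (pd i φ x * pd j (pd i φ) x)) := by
        congr 2 with x
        rw [pd_mul i (hdiff hu x) (hdiff (hψ j) x), pd_comm hφ i j]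
        ring
    _ = _ := by
        rw [integral_add, neg_add']
        · exact (((hψ i).continuous.mul (hψ j).continuous).mul
            (continuous_pd i hu)).integrable_of_hasCompactSupport (hφc.pd i).mul_right.mul_right
        · exact Continuous.integrable_of_hasCompactSupport
            (hu.continuous.mul ((hψ i).continuous.mul (continuous_pd j (hψ i))))
            ((hφc.pd i).pd j).mul_left.mul_left

end PartialDerivative

theorem laplacian_drift_by_parts_general (d : ℕ)
    (φ : EuclideanSpace ℝ (Fin d) → ℝ)
    (hφ : ContDiff ℝ 2 φ) (hφc : HasCompactSupport φ)
    (v : EuclideanSpace ℝ (Fin d) → EuclideanSpace ℝ (Fin d))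
    (hv : ContDiff ℝ 1 v)
    (hdiv : ∀ x, ∑ j, pd j (fun y => v y j) x = 0) :
    (∫ x, (∑ i, pd i (pd i φ) x) * (∑ j, v x j * pd j φ x)) =
      -(∑ i, ∑ j, ∫ x, pd i φ x * pd j φ x * pd i (fun y => v y j) x) := by
  have hψ (i : Fin d) : ContDiff ℝ 1 (pd i φ) := contDiff_pd i hφ (by norm_num)
  have hvj (j : Fin d) : ContDiff ℝ 1 (fun y => v y j) := (contDiff_piLp 2).1 hv j
  calc _ = ∑ i, ∑ j, ∫ x, pd i (pd i φ) x * (v x j * pd j φ x) :=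
        integral_sum_mul_sum _ _ fun i _ j _ =>
          Continuous.integrable_of_hasCompactSupport
            ((continuous_pd i (hψ i)).mul ((hvj j).continuous.mul (hψ j).continuous))
            ((hφc.pd i).pd i).mul_right
    _ = ∑ i, ∑ j, (-(∫ x, pd i φ x * pd j φ x * pd i (fun y => v y j) x)
          - ∫ x, v x j * (pd i φ x * pd j (pd i φ) x)) := by
        simp only [integral_pd_pd_mul_mul_pd_eq hφ hφc (hvj _)]
    _ = _ := by
        simp only [Finset.sum_sub_distrib, Finset.sum_neg_distrib,
          sum_integral_mul_mul_pd_self_eq_zero hv hdiv (hψ _) (hφc.pd _), sub_zero]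

/-- Integration by parts: for `v` divergence-free,
`∫ Δφ (v·∇φ) = -∑_{i,j} ∫ ∂_i φ ∂_j φ ∂_i v_j`. -/
theorem laplacian_drift_by_parts (d : ℕ) (hd : 1 ≤ d)
    (φ : EuclideanSpace ℝ (Fin d) → ℝ)
    (hφ : ContDiff ℝ 2 φ) (hφc : HasCompactSupport φ)
    (v : EuclideanSpace ℝ (Fin d) → EuclideanSpace ℝ (Fin d))
    (hv : ContDiff ℝ 1 v)
    (hdiv : ∀ x, ∑ j, pd j (fun y => v y j) x = 0) :
    (∫ x, (∑ i, pd i (pd i φ) x) * (∑ j, v x j * pd j φ x)) =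
      -(∑ i, ∑ j, ∫ x, pd i φ x * pd j φ x * pd i (fun y => v y j) x) :=
  laplacian_drift_by_parts_general d φ hφ hφc v hv hdiv
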